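/- arXiv:2408.05046 — 2 statements merged into one kernel-verified Lean document; each statement's English description precedes it below -/
import Mathlib

section
/- Let Z = (U, Ω, r) be a non-degenerate multimatroid with total order ≺ on its skew classes. For each basis B define H_Z(B) = { T ∈ T(Ω) : B − B_int ⊆ T ⊆ B ∪ B_ext }, where B_int = { B_ω : ω active w.r.t. B } and B_ext = { B̲_ω : ω active w.r.t. B }. Then each transversal T of Ω belongs to exactly ∏_{ω ∈ mcs(T,≺)} (|ω| − 1) of the sets H_Z(B) over bases B, where mcs(T,≺) is the set of skew classes containing min(C) for some circuit C ⊆ T. -/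
open Finset
open scoped Classical

variable {U ι : Type}

section Defs
variable [DecidableEq U] [Fintype U] [DecidableEq ι] [Fintype ι]

/-- `S` is a subtransversal: it meets each skew class at most once.
Skew classes are the fibers of `cls : U → ι`. -/
def Subtransversal (cls : U → ι) (S : Finset U) : Prop :=
  Set.InjOn cls ↑S

/-- The skew class with index `i`, as a finset. -/
def skewClass (cls : U → ι) (i : ι) : Finset U :=
  Finset.univ.filter (fun x => cls x = i)

/-- `T` is a transversal: it meets each skew class exactly once. -/
def Transversal (cls : U → ι) (T : Finset U) : Prop :=
  Subtransversal cls T ∧ ∀ i : ι, ∃ x ∈ T, cls x = i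

/-- The multimatroid rank axioms for a rank function `r` on the carrier given by
`cls : U → ι` (whose fibers, assumed nonempty, are the skew classes).
The first three fields express axiom (R1) (each transversal carries a matroid),
and `axiomR2` is axiom (R2). -/
structure IsMultimatroid (cls : U → ι) (r : Finset U → ℕ) : Prop where
  cls_surj : Function.Surjective cls
  rank_le_card : ∀ S, Subtransversal cls S → r S ≤ S.card
  mono : ∀ S T, Subtransversal cls T → S ⊆ T → r S ≤ r T
  submod : ∀ S T, Subtransversal cls (S ∪ T) → r (S ∪ T) + r (S ∩ T) ≤ r S + r T
  axiomR2 : ∀ S, ∀ x y : U, Subtransversal cls S → cls x = cls y → x ≠ y →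
    (∀ u ∈ S, cls u ≠ cls x) →
    2 * r S + 1 ≤ r (insert x S) + r (insert y S)

/-- An independent set of the multimatroid. -/
def Indep (cls : U → ι) (r : Finset U → ℕ) (S : Finset U) : Prop :=
  Subtransversal cls S ∧ r S = S.card

/-- A basis: a maximal independent subtransversal. -/
def MMBasis (cls : U → ι) (r : Finset U → ℕ) (B : Finset U) : Prop :=
  Indep cls r B ∧ ∀ S, Indep cls r S → B ⊆ S → S = B

/-- A circuit: a minimal dependent subtransversal. -/
def Circuit (cls : U → ι) (r : Finset U → ℕ) (C : Finset U) : Prop :=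
  Subtransversal cls C ∧ r C < C.card ∧ ∀ D ⊂ C, ¬ r D < D.card

/-- Non-degenerate: every skew class has at least two elements. -/
def Nondegenerate (cls : U → ι) : Prop :=
  ∀ i : ι, 2 ≤ (skewClass cls i).card

/-- An element is singular if its singleton has rank `0`. -/
def Singular (r : Finset U → ℕ) (e : U) : Prop := r {e} = 0

end Defs

section Order
variable [DecidableEq U] [Fintype U] [DecidableEq ι] [Fintype ι] [LinearOrder ι]

/-- The skew class `i` is active with respect to the transversal `T` (in
particular, with respect to a basis): there is a circuit `C` with
`C − ω_i ⊆ T` whose `≺`-least element lies in the class `i`. -/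
def Active (cls : U → ι) (r : Finset U → ℕ) (T : Finset U) (i : ι) : Prop :=
  ∃ C, Circuit cls r C ∧ C \ skewClass cls i ⊆ T ∧
    ∃ m ∈ C, cls m = i ∧ ∀ x ∈ C, i ≤ cls x

end Order

/-- For a basis `B` and active skew class `i`, the element `B̲_ω`: the unique element
of the fundamental circuit `C(B,ω)` outside `B` (with default value `d` when the
fundamental circuit does not exist). -/
noncomputable def underElt [DecidableEq U] [Fintype U] [DecidableEq ι] [Fintype ι]
    (cls : U → ι) (r : Finset U → ℕ) (B : Finset U) (i : ι) (d : U) : U :=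
  if h : ∃ x : U, ∃ C, Circuit cls r C ∧ C ⊆ B ∪ skewClass cls i ∧ x ∈ C ∧ x ∉ B
  then h.choose else d

set_option linter.unusedSectionVars false
set_option linter.unusedVariables false

section Basics
variable [DecidableEq U] [Fintype U] [DecidableEq ι] [Fintype ι]
variable {cls : U → ι} {r : Finset U → ℕ}

/-- x is dependent on S -/
def Dep (cls : U → ι) (r : Finset U → ℕ) (x : U) (S : Finset U) : Prop :=
  r (insert x S) = r S

lemma subtr_mono {S S' : Finset U} (h : Subtransversal cls S') (hss : S ⊆ S') :
    Subtransversal cls S :=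
  Set.InjOn.mono (Finset.coe_subset.mpr hss) h

lemma subtr_insert {x : U} {S : Finset U} (hS : Subtransversal cls S)
    (hx : ∀ u ∈ S, cls u ≠ cls x) : Subtransversal cls (insert x S) := by
  intro a ha b hb hab
  simp only [Finset.coe_insert, Set.mem_insert_iff, Finset.mem_coe] at ha hb
  rcases ha with rfl | ha <;> rcases hb with rfl | hb
  · rfl
  · exact absurd hab.symm (hx b hb)
  · exact absurd hab (hx a ha)
  · exact hS ha hb hab

lemma subtr_empty : Subtransversal cls (∅ : Finset U) := by
  intro a ha; simp at ha

lemma r_empty (hM : IsMultimatroid cls r) : r (∅ : Finset U) = 0 :=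
  Nat.le_zero.mp (by simpa using hM.rank_le_card ∅ subtr_empty)

lemma r_singleton_le (hM : IsMultimatroid cls r) (x : U) : r {x} ≤ 1 := by
  simpa using hM.rank_le_card {x} (by intro a ha b hb hab; simp at ha hb; simp [ha, hb])

lemma r_insert_le (hM : IsMultimatroid cls r) {x : U} {S : Finset U}
    (h : Subtransversal cls (insert x S)) : r (insert x S) ≤ r S + 1 := by
  have hsub := hM.submod {x} S (by rwa [← Finset.insert_eq])
  rw [← Finset.insert_eq] at hsub
  have h1 : r ({x} ∩ S) ≥ 0 := Nat.zero_le _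
  have := r_singleton_le hM (cls := cls) x
  omega

lemma r_le_insert (hM : IsMultimatroid cls r) {x : U} {S : Finset U}
    (h : Subtransversal cls (insert x S)) : r S ≤ r (insert x S) :=
  hM.mono S (insert x S) h (Finset.subset_insert x S)

lemma dep_or_indep (hM : IsMultimatroid cls r) {x : U} {S : Finset U}
    (h : Subtransversal cls (insert x S)) :
    Dep cls r x S ∨ r (insert x S) = r S + 1 := by
  have h1 := r_insert_le hM h
  have h2 := r_le_insert hM h
  unfold Dep; omega

lemma dep_mono (hM : IsMultimatroid cls r) {x : U} {S S' : Finset U}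
    (hss : S ⊆ S') (h : Subtransversal cls (insert x S')) (hd : Dep cls r x S) :
    Dep cls r x S' := by
  by_cases hx : x ∈ S'
  · unfold Dep; rw [Finset.insert_eq_self.mpr hx]
  · have hsub := hM.submod (insert x S) S' (by rwa [Finset.insert_union, Finset.union_eq_right.mpr hss])
    rw [Finset.insert_union, Finset.union_eq_right.mpr hss] at hsub
    have hint : (insert x S) ∩ S' = S := by
      ext a; simp only [Finset.mem_inter, Finset.mem_insert]
      constructor
      · rintro ⟨rfl | ha, ha'⟩
        · exact absurd ha' hx
        · exact ha
      · intro ha; exact ⟨Or.inr ha, hss ha⟩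
    rw [hint] at hsub
    unfold Dep at hd ⊢
    have := r_le_insert hM h
    omega

lemma dep_restrict (hM : IsMultimatroid cls r) {x : U} {J S : Finset U}
    (hJS : J ⊆ S) (hr : r J = r S) (h : Subtransversal cls (insert x S))
    (hd : Dep cls r x S) : Dep cls r x J := by
  have h1 : r (insert x J) ≤ r (insert x S) :=
    hM.mono _ _ h (Finset.insert_subset_insert x hJS)
  have h2 : r J ≤ r (insert x J) :=
    r_le_insert hM (subtr_mono h (Finset.insert_subset_insert x hJS))
  unfold Dep at hd ⊢; omega

lemma r2_unique (hM : IsMultimatroid cls r) {S : Finset U} {x y : U}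
    (hS : Subtransversal cls S) (hfree : ∀ u ∈ S, cls u ≠ cls x)
    (hcls : cls x = cls y) (hxy : x ≠ y)
    (hx : Dep cls r x S) (hy : Dep cls r y S) : False := by
  have := hM.axiomR2 S x y hS hcls hxy hfree
  unfold Dep at hx hy
  omega

end Basics

section Circuits
variable [DecidableEq U] [Fintype U] [DecidableEq ι] [Fintype ι]
variable {cls : U → ι} {r : Finset U → ℕ}

/-- subsets of independent sets are independent -/
lemma indep_subset (hM : IsMultimatroid cls r) {J D : Finset U}
    (hJ : Subtransversal cls J) (hJi : r J = J.card) (hDJ : D ⊆ J) :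
    r D = D.card := by
  classical
  -- induction on card (J \ D)
  have key : ∀ n : ℕ, ∀ J D : Finset U, Subtransversal cls J → r J = J.card → D ⊆ J →
      (J \ D).card = n → r D = D.card := by
    intro n
    induction n with
    | zero =>
      intro J D hJ hJi hDJ hcard
      have : J = D := by
        have := Finset.sdiff_eq_empty_iff_subset.mp (Finset.card_eq_zero.mp hcard)
        exact Finset.Subset.antisymm this hDJ
      rw [← this]; exact hJi
    | succ n ih =>
      intro J D hJ hJi hDJ hcard
      have hne : (J \ D).Nonempty := by
        rw [← Finset.card_pos, hcard]; omega
      obtain ⟨x, hx⟩ := hne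
      have hxJ : x ∈ J := (Finset.mem_sdiff.mp hx).1
      have hxD : x ∉ D := (Finset.mem_sdiff.mp hx).2
      set J' := J.erase x with hJ'def
      have hJ'sub : J' ⊆ J := Finset.erase_subset x J
      have hinsert : insert x J' = J := Finset.insert_erase hxJ
      have hsubJ' : Subtransversal cls J' := subtr_mono hJ hJ'sub
      have hle : r J ≤ r J' + 1 := by
        have := r_insert_le hM (x := x) (S := J') (by rwa [hinsert])
        rwa [hinsert] at this
      have hcardJ' : J'.card = J.card - 1 := Finset.card_erase_of_mem hxJ
      have hcpos : 0 < J.card := Finset.card_pos.mpr ⟨x, hxJ⟩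
      have hJ'le : r J' ≤ J'.card := hM.rank_le_card J' hsubJ'
      have hJ'i : r J' = J'.card := by omega
      have hDJ' : D ⊆ J' := fun a ha => Finset.mem_erase.mpr ⟨fun h => hxD (h ▸ ha), hDJ ha⟩
      have : (J' \ D).card = n := by
        have : J' \ D = (J \ D).erase x := by
          ext a
          simp only [Finset.mem_sdiff, Finset.mem_erase, hJ'def]
          tauto
        rw [this, Finset.card_erase_of_mem hx, hcard]
        omega

      exact ih J' D hsubJ' hJ'i hDJ' this
  exact key (J \ D).card J D hJ hJi hDJ rfl

/-- every subtransversal contains an independent subset of the same rank -/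
lemma exists_rank_basis (hM : IsMultimatroid cls r) {S : Finset U}
    (hS : Subtransversal cls S) : ∃ J ⊆ S, r J = r S ∧ r J = J.card := by
  classical
  induction S using Finset.strongInduction with
  | _ S ih =>
    by_cases hfull : r S = S.card
    · exact ⟨S, Finset.Subset.refl S, rfl, hfull⟩
    · have hlt : r S < S.card := lt_of_le_of_ne (hM.rank_le_card S hS) hfull
      have hne : S.Nonempty := by
        rw [← Finset.card_pos]; omega
      obtain ⟨x, hxS⟩ := hne
      set S' := S.erase x with hS'def
      have hS'sub : S' ⊆ S := Finset.erase_subset x S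
      have hS'ssub : S' ⊂ S := Finset.erase_ssubset hxS
      have hsubS' : Subtransversal cls S' := subtr_mono hS hS'sub
      have hinsert : insert x S' = S := Finset.insert_erase hxS
      obtain ⟨J', hJ'S', hJ'r, hJ'i⟩ := ih S' hS'ssub hsubS'
      have hle : r S ≤ r S' + 1 := by
        have := r_insert_le hM (x := x) (S := S') (by rwa [hinsert])
        rwa [hinsert] at this
      by_cases hcase : r S' = r S
      · exact ⟨J', hJ'S'.trans hS'sub, by omega, hJ'i⟩
      · have hS'lt : r S' < r S := by
          have := hM.mono S' S hS hS'sub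
          omega
        -- J = insert x J'
        have hxJ' : x ∉ J' := fun h => (Finset.mem_erase.mp (hJ'S' h)).1 rfl
        refine ⟨insert x J', ?_, ?_, ?_⟩
        · rw [← hinsert]; exact Finset.insert_subset_insert x (hJ'S'.trans (Finset.Subset.refl _))
        all_goals {
          have hsub2 : Subtransversal cls (insert x J') := by
            refine subtr_mono hS ?_
            rw [← hinsert]
            exact Finset.insert_subset_insert x hJ'S'
          have hup : r (insert x J') ≤ r J' + 1 := r_insert_le hM hsub2
          have hlow : r J' + 1 ≤ r (insert x J') := by
            have hsm := hM.submod S' (insert x J') (by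
              rw [Finset.union_insert, Finset.union_eq_left.mpr hJ'S', hinsert]; exact hS)
            rw [Finset.union_insert, Finset.union_eq_left.mpr hJ'S', hinsert] at hsm
            have hint : S' ∩ insert x J' = J' := by
              ext a
              simp only [Finset.mem_inter, Finset.mem_insert]
              constructor
              · rintro ⟨ha, rfl | ha'⟩
                · exact absurd ha (Finset.notMem_erase a S)
                · exact ha'
              · intro ha; exact ⟨hJ'S' ha, Or.inr ha⟩
            rw [hint] at hsm
            omega
          have hcard : (insert x J').card = J'.card + 1 := Finset.card_insert_of_notMem hxJ'
          omega
        }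

/-- a dependent subtransversal contains a circuit -/
lemma exists_circuit (hM : IsMultimatroid cls r) {S : Finset U}
    (hS : Subtransversal cls S) (hdep : r S < S.card) :
    ∃ C ⊆ S, Circuit cls r C := by
  classical
  induction S using Finset.strongInduction with
  | _ S ih =>
    by_cases hmin : ∀ D ⊂ S, ¬ r D < D.card
    · exact ⟨S, Finset.Subset.refl S, hS, hdep, hmin⟩
    · push_neg at hmin
      obtain ⟨D, hDS, hDdep⟩ := hmin
      obtain ⟨C, hCD, hC⟩ := ih D hDS (subtr_mono hS hDS.subset) hDdep
      exact ⟨C, hCD.trans hDS.subset, hC⟩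

lemma circuit_r (hM : IsMultimatroid cls r) {C : Finset U} (hC : Circuit cls r C) :
    r C + 1 = C.card := by
  obtain ⟨hsub, hlt, hmin⟩ := hC
  have hne : C.Nonempty := by rw [← Finset.card_pos]; omega
  obtain ⟨x, hx⟩ := hne
  have herase : ¬ r (C.erase x) < (C.erase x).card := hmin _ (Finset.erase_ssubset hx)
  have h1 : r (C.erase x) ≤ (C.erase x).card :=
    hM.rank_le_card _ (subtr_mono hsub (Finset.erase_subset x C))
  have h2 : r C ≤ r (C.erase x) + 1 := by
    have hins : insert x (C.erase x) = C := Finset.insert_erase hx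
    have := r_insert_le hM (x := x) (S := C.erase x) (by rwa [hins])
    rwa [hins] at this
  have h3 : (C.erase x).card = C.card - 1 := Finset.card_erase_of_mem hx
  have h5 : r (C.erase x) ≤ r C := hM.mono _ _ hsub (Finset.erase_subset x C)
  have h4 : 0 < C.card := Finset.card_pos.mpr ⟨x, hx⟩
  omega

lemma circuit_dep_erase (hM : IsMultimatroid cls r) {C : Finset U} {x : U}
    (hC : Circuit cls r C) (hx : x ∈ C) : Dep cls r x (C.erase x) := by
  have hr := circuit_r hM hC
  have herase : ¬ r (C.erase x) < (C.erase x).card := hC.2.2 _ (Finset.erase_ssubset hx)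
  have h1 : r (C.erase x) ≤ (C.erase x).card :=
    hM.rank_le_card _ (subtr_mono hC.1 (Finset.erase_subset x C))
  have h3 : (C.erase x).card = C.card - 1 := Finset.card_erase_of_mem hx
  have h4 : 0 < C.card := Finset.card_pos.mpr ⟨x, hx⟩
  unfold Dep
  rw [Finset.insert_erase hx]
  omega

/-- dependence is equivalent to the existence of a circuit through the point -/
lemma dep_iff_circuit (hM : IsMultimatroid cls r) {x : U} {S : Finset U}
    (h : Subtransversal cls (insert x S)) (hxS : x ∉ S) :
    Dep cls r x S ↔ ∃ C, Circuit cls r C ∧ x ∈ C ∧ C ⊆ insert x S := by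
  constructor
  · intro hd
    obtain ⟨J, hJS, hJr, hJi⟩ := exists_rank_basis hM (subtr_mono h (Finset.subset_insert x S))
    have hdJ : Dep cls r x J := dep_restrict hM hJS hJr h hd
    have hxJ : x ∉ J := fun hh => hxS (hJS hh)
    have hsubJ : Subtransversal cls (insert x J) :=
      subtr_mono h (Finset.insert_subset_insert x hJS)
    have hcard : (insert x J).card = J.card + 1 := Finset.card_insert_of_notMem hxJ
    have hdep : r (insert x J) < (insert x J).card := by
      unfold Dep at hdJ; omega
    obtain ⟨C, hCJ, hC⟩ := exists_circuit hM hsubJ hdep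
    refine ⟨C, hC, ?_, hCJ.trans (Finset.insert_subset_insert x hJS)⟩
    by_contra hxC
    have hCJ' : C ⊆ J := fun a ha => by
      rcases Finset.mem_insert.mp (hCJ ha) with rfl | h'
      · exact absurd ha hxC
      · exact h'
    have h6 := hC.2.1
    have := indep_subset hM (subtr_mono h (hJS.trans (Finset.subset_insert x S))) hJi hCJ'
    omega
  · rintro ⟨C, hC, hxC, hCS⟩
    have hd := circuit_dep_erase hM hC hxC
    have hsub : C.erase x ⊆ S := by
      intro a ha
      obtain ⟨hax, haC⟩ := Finset.mem_erase.mp ha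
      rcases Finset.mem_insert.mp (hCS haC) with rfl | h'
      · exact absurd rfl hax
      · exact h'
    exact dep_mono hM hsub h hd

end Circuits

section Trans
variable [DecidableEq U] [Fintype U] [DecidableEq ι] [Fintype ι]
variable {cls : U → ι} {r : Finset U → ℕ}

noncomputable def telt (cls : U → ι) {T : Finset U} (hT : Transversal cls T) (i : ι) : U :=
  (hT.2 i).choose

lemma telt_mem {T : Finset U} (hT : Transversal cls T) (i : ι) : telt cls hT i ∈ T :=
  (hT.2 i).choose_spec.1

lemma telt_cls {T : Finset U} (hT : Transversal cls T) (i : ι) : cls (telt cls hT i) = i :=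
  (hT.2 i).choose_spec.2

lemma telt_unique {T : Finset U} (hT : Transversal cls T) {u : U} (hu : u ∈ T) :
    telt cls hT (cls u) = u :=
  hT.1 (Finset.mem_coe.mpr (telt_mem hT (cls u))) (Finset.mem_coe.mpr hu) (telt_cls hT (cls u))

lemma mem_transversal_iff {T : Finset U} (hT : Transversal cls T) {u : U} :
    u ∈ T ↔ u = telt cls hT (cls u) :=
  ⟨fun hu => (telt_unique hT hu).symm, fun h => h ▸ telt_mem hT (cls u)⟩

lemma mem_skewClass {x : U} {i : ι} : x ∈ skewClass cls i ↔ cls x = i := by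
  simp [skewClass]

end Trans

section Stepwise
variable [DecidableEq U] [Fintype U] [DecidableEq ι] [Fintype ι] [LinearOrder ι]
variable {cls : U → ι} {r : Finset U → ℕ}

/-- the part of `S` in skew classes above `i` -/
def above (cls : U → ι) (S : Finset U) (i : ι) : Finset U :=
  S.filter (fun u => i < cls u)

lemma above_subset {S : Finset U} {i : ι} : above cls S i ⊆ S := Finset.filter_subset _ _

lemma mem_above {S : Finset U} {i : ι} {u : U} :
    u ∈ above cls S i ↔ u ∈ S ∧ i < cls u := Finset.mem_filter

lemma atLeast_eq_insert {B : Finset U} (hB : Transversal cls B) (i : ι) :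
    B.filter (fun u => i ≤ cls u) = insert (telt cls hB i) (above cls B i) := by
  ext u
  simp only [Finset.mem_filter, Finset.mem_insert, mem_above]
  constructor
  · rintro ⟨huB, hle⟩
    rcases lt_or_eq_of_le hle with hlt | heq
    · exact Or.inr ⟨huB, hlt⟩
    · left; rw [← telt_unique hB huB, ← heq]
  · rintro (rfl | ⟨huB, hlt⟩)
    · exact ⟨telt_mem hB i, (telt_cls hB i).ge⟩
    · exact ⟨huB, le_of_lt hlt⟩

lemma telt_notMem_above {B : Finset U} (hB : Transversal cls B) (i : ι) :
    telt cls hB i ∉ above cls B i := by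
  intro h
  have := (mem_above.mp h).2
  rw [telt_cls hB i] at this
  exact lt_irrefl i this

/-- stepwise independence implies independence -/
lemma stepwise_indep (hM : IsMultimatroid cls r) {B : Finset U} (hB : Transversal cls B)
    (h : ∀ i, ¬ Dep cls r (telt cls hB i) (above cls B i)) : r B = B.card := by
  classical
  -- rank of the "at least i" part equals its cardinality
  have base : ∀ i : ι, (Finset.univ.filter (fun j => i < j)) = ∅ →
      r (B.filter (fun u => i ≤ cls u)) = (B.filter (fun u => i ≤ cls u)).card := by
    intro i hA
    have habove : above cls B i = ∅ := by
      rw [Finset.eq_empty_iff_forall_notMem]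
      intro u hu
      exact Finset.eq_empty_iff_forall_notMem.mp hA (cls u)
        (Finset.mem_filter.mpr ⟨Finset.mem_univ _, (mem_above.mp hu).2⟩)
    rw [atLeast_eq_insert hB i, habove]
    have hi := h i
    rw [habove] at hi
    have hsub : Subtransversal cls (insert (telt cls hB i) (∅ : Finset U)) := by
      refine subtr_mono hB.1 ?_
      simp [telt_mem hB i]
    rcases dep_or_indep hM hsub with hd | hind
    · exact absurd hd hi
    · rw [hind, r_empty hM]; simp
  have key : ∀ n : ℕ, ∀ i : ι, (Finset.univ.filter (fun j => i < j)).card ≤ n →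
      r (B.filter (fun u => i ≤ cls u)) = (B.filter (fun u => i ≤ cls u)).card := by
    intro n
    induction n with
    | zero =>
      intro i hcard
      exact base i (Finset.card_eq_zero.mp (Nat.le_zero.mp hcard))
    | succ n ih =>
      intro i hcard
      by_cases hA : (Finset.univ.filter (fun j => i < j)) = ∅
      · exact base i hA
      · have hAne : (Finset.univ.filter (fun j => i < j)).Nonempty :=
          Finset.nonempty_iff_ne_empty.mpr hA
        set j := (Finset.univ.filter (fun j => i < j)).min' hAne with hjdef
        have hij : i < j := (Finset.mem_filter.mp ((Finset.univ.filter (fun j => i < j)).min'_mem hAne)).2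
        have hjmin : ∀ k, i < k → j ≤ k := fun k hk =>
          Finset.min'_le _ k (Finset.mem_filter.mpr ⟨Finset.mem_univ _, hk⟩)
        have hstep1 : above cls B i = B.filter (fun u => j ≤ cls u) := by
          ext u
          simp only [mem_above, Finset.mem_filter]
          exact ⟨fun ⟨h1, h2⟩ => ⟨h1, hjmin _ h2⟩, fun ⟨h1, h2⟩ => ⟨h1, lt_of_lt_of_le hij h2⟩⟩
        have hihcard : (Finset.univ.filter (fun k => j < k)).card ≤ n := by
          have hsub : (Finset.univ.filter (fun k => j < k)) ⊆
              (Finset.univ.filter (fun k => i < k)).erase j := by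
            intro k hk
            have hjk := (Finset.mem_filter.mp hk).2
            exact Finset.mem_erase.mpr ⟨ne_of_gt hjk, Finset.mem_filter.mpr ⟨Finset.mem_univ _, lt_trans hij hjk⟩⟩
          have h1 := Finset.card_le_card hsub
          have h2 := Finset.card_erase_of_mem ((Finset.univ.filter (fun j => i < j)).min'_mem hAne)
          have h3 : 0 < (Finset.univ.filter (fun j => i < j)).card := Finset.card_pos.mpr hAne
          rw [← hjdef] at h2
          omega
        have hIH := ih j hihcard
        rw [atLeast_eq_insert hB i]
        have hnotmem := telt_notMem_above hB i
        have hsubins : Subtransversal cls (insert (telt cls hB i) (above cls B i)) := by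
          refine subtr_mono hB.1 ?_
          refine Finset.insert_subset (telt_mem hB i) above_subset
        rcases dep_or_indep hM hsubins with hd | hind
        · exact absurd hd (h i)
        · rw [hind, Finset.card_insert_of_notMem hnotmem, hstep1, hIH]
  cases isEmpty_or_nonempty ι with
  | inl hempty =>
    have hBempty : B = ∅ := by
      rw [Finset.eq_empty_iff_forall_notMem]
      exact fun u _ => hempty.elim (cls u)
    rw [hBempty, r_empty hM]; simp
  | inr hne =>
    have huniv : (Finset.univ : Finset ι).Nonempty := Finset.univ_nonempty
    set i0 := (Finset.univ : Finset ι).min' huniv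
    have hBfull : B.filter (fun u => i0 ≤ cls u) = B := by
      apply Finset.filter_true_of_mem
      intro u _
      exact Finset.min'_le _ _ (Finset.mem_univ _)
    have := key (Fintype.card ι) i0 (by
      calc (Finset.univ.filter (fun j => i0 < j)).card ≤ (Finset.univ : Finset ι).card :=
            Finset.card_filter_le _ _
        _ = Fintype.card ι := Finset.card_univ)
    rwa [hBfull] at this

/-- independence implies stepwise independence -/
lemma indep_stepwise (hM : IsMultimatroid cls r) {B : Finset U} (hB : Transversal cls B)
    (hind : r B = B.card) (i : ι) : ¬ Dep cls r (telt cls hB i) (above cls B i) := by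
  intro hd
  have h1 : insert (telt cls hB i) (above cls B i) ⊆ B := by
    rw [← atLeast_eq_insert hB i]; exact Finset.filter_subset _ _
  have h2 : r (insert (telt cls hB i) (above cls B i)) =
      (insert (telt cls hB i) (above cls B i)).card :=
    indep_subset hM hB.1 hind h1
  have h3 : r (above cls B i) = (above cls B i).card :=
    indep_subset hM hB.1 hind (above_subset.trans (Finset.Subset.refl B))
  have h4 := Finset.card_insert_of_notMem (telt_notMem_above hB i)
  unfold Dep at hd
  omega

/-- a basis is the same as an independent transversal -/
lemma mmbasis_iff (hM : IsMultimatroid cls r) (hnd : Nondegenerate cls) {B : Finset U} :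
    MMBasis cls r B ↔ Transversal cls B ∧ r B = B.card := by
  constructor
  · rintro ⟨⟨hsub, hind⟩, hmax⟩
    refine ⟨⟨hsub, ?_⟩, hind⟩
    intro i
    by_contra hno
    push_neg at hno
    have hfree : ∀ u ∈ B, cls u ≠ i := fun u hu h => hno u hu h
    -- get two elements of class i
    have h2 := hnd i
    obtain ⟨x, hx, y, hy, hxy⟩ := Finset.one_lt_card.mp (by omega : 1 < (skewClass cls i).card)
    have hclsx : cls x = i := mem_skewClass.mp hx
    have hclsy : cls y = i := mem_skewClass.mp hy
    have hxB : x ∉ B := fun h => hfree x h hclsx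
    have hyB : y ∉ B := fun h => hfree y h hclsy
    have hsubx : Subtransversal cls (insert x B) :=
      subtr_insert hsub (fun u hu => hclsx ▸ hfree u hu)
    have hsuby : Subtransversal cls (insert y B) :=
      subtr_insert hsub (fun u hu => hclsy ▸ hfree u hu)
    have hdx : Dep cls r x B := by
      rcases dep_or_indep hM hsubx with hd | hi
      · exact hd
      · exfalso
        have : insert x B = B := hmax _ ⟨hsubx, by rw [hi, hind, Finset.card_insert_of_notMem hxB]⟩
          (Finset.subset_insert x B)
        exact hxB (this ▸ Finset.mem_insert_self x B)
    have hdy : Dep cls r y B := by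
      rcases dep_or_indep hM hsuby with hd | hi
      · exact hd
      · exfalso
        have : insert y B = B := hmax _ ⟨hsuby, by rw [hi, hind, Finset.card_insert_of_notMem hyB]⟩
          (Finset.subset_insert y B)
        exact hyB (this ▸ Finset.mem_insert_self y B)
    exact r2_unique hM hsub (fun u hu => hclsx ▸ hfree u hu) (hclsx.trans hclsy.symm) hxy hdx hdy
  · rintro ⟨hT, hind⟩
    refine ⟨⟨hT.1, hind⟩, ?_⟩
    intro S hS hBS
    refine Finset.Subset.antisymm ?_ hBS
    intro u huS
    obtain ⟨b, hbB, hbcls⟩ := hT.2 (cls u)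
    have hbu : b = u := hS.1 (Finset.mem_coe.mpr (hBS hbB)) (Finset.mem_coe.mpr huS) hbcls
    exact hbu ▸ hbB

end Stepwise

section Core
variable [DecidableEq U] [Fintype U] [DecidableEq ι] [Fintype ι] [LinearOrder ι]
variable {cls : U → ι} {r : Finset U → ℕ}

lemma swap_dep (hM : IsMultimatroid cls r) {X : Finset U} {t b t' : U}
    (hX : Subtransversal cls X)
    (hcls : cls t = cls b) (htb : t ≠ b)
    (hfree : ∀ u ∈ X, cls u ≠ cls t) (ht' : cls t' ≠ cls t)
    (hsub1 : Subtransversal cls (insert t' (insert t X)))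
    (hsub2 : Subtransversal cls (insert t' (insert b X)))
    (hdt : Dep cls r t X) :
    Dep cls r t' (insert t X) ↔ Dep cls r t' (insert b X) := by
  have hsubt'X : Subtransversal cls (insert t' X) := by
    refine subtr_mono hsub1 ?_
    intro a ha
    rcases Finset.mem_insert.mp ha with rfl | h
    · exact Finset.mem_insert_self _ _
    · exact Finset.mem_insert_of_mem (Finset.mem_insert_of_mem h)
  have hcomm1 : insert t' (insert t X) = insert t (insert t' X) := Finset.insert_comm t' t X
  have hcomm2 : insert t' (insert b X) = insert b (insert t' X) := Finset.insert_comm t' b X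
  have hdtins : Dep cls r t (insert t' X) := by
    refine dep_mono hM (Finset.subset_insert t' X) ?_ hdt
    rwa [← hcomm1]
  constructor
  · intro hd
    -- r(insert t' (insert t X)) = r (insert t X) = r X ⇒ Dep t' X
    have h1 : r (insert t (insert t' X)) = r (insert t' X) := hdtins
    have h2 : Dep cls r t' X := by
      unfold Dep at hd hdt ⊢
      rw [hcomm1] at hd
      omega
    exact dep_mono hM (Finset.subset_insert b X) hsub2 h2
  · intro hd
    by_cases hdx : Dep cls r t' X
    · exact dep_mono hM (Finset.subset_insert t X) hsub1 hdx
    · exfalso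
      have hind : r (insert t' X) = r X + 1 :=
        (dep_or_indep hM hsubt'X).resolve_left hdx
      have hmono1 : r (insert t' X) ≤ r (insert t' (insert b X)) := by
        refine hM.mono _ _ hsub2 ?_
        exact Finset.insert_subset_insert t' (Finset.subset_insert b X)
      have hle : r (insert b X) ≤ r X + 1 :=
        r_insert_le hM (subtr_mono hsub2 (Finset.subset_insert t' _))
      have hbdep : Dep cls r b (insert t' X) := by
        unfold Dep at hd ⊢
        rw [hcomm2] at hd hmono1
        omega
      exact r2_unique hM hsubt'X
        (fun u hu => by
          rcases Finset.mem_insert.mp hu with rfl | h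
          · exact ht'
          · exact hfree u h)
        hcls htb hdtins hbdep

/-- the mixed set: part of `B` above `j`, part of `T` in classes in `(i, j]` -/
def mixedSet (cls : U → ι) (T B : Finset U) (i j : ι) : Finset U :=
  B.filter (fun u => j < cls u) ∪ T.filter (fun u => i < cls u ∧ cls u ≤ j)

lemma core (hM : IsMultimatroid cls r) {T B : Finset U}
    (hT : Transversal cls T) (hB : Transversal cls B) (i : ι)
    (hcond : ∀ j, i < j →
      telt cls hB j = telt cls hT j ∨ Dep cls r (telt cls hT j) (above cls B j)) :
    Dep cls r (telt cls hT i) (above cls B i) ↔ Dep cls r (telt cls hT i) (above cls T i) := by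
  classical
  have hbase : ∀ j : ι, j = i → mixedSet cls T B i j = above cls B i := by
    rintro j rfl
    ext u
    simp only [mixedSet, Finset.mem_union, Finset.mem_filter, mem_above]
    constructor
    · rintro (⟨h1, h2⟩ | ⟨h1, h2, h3⟩)
      · exact ⟨h1, h2⟩
      · exact absurd (lt_of_lt_of_le h2 h3) (lt_irrefl j)
    · rintro ⟨h1, h2⟩
      exact Or.inl ⟨h1, h2⟩
  have main : ∀ n : ℕ, ∀ j : ι, i ≤ j →
      (Finset.univ.filter (fun k => i < k ∧ k ≤ j)).card ≤ n →
      (Dep cls r (telt cls hT i) (mixedSet cls T B i j) ↔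
        Dep cls r (telt cls hT i) (above cls B i)) := by
    intro n
    induction n with
    | zero =>
      intro j hij hcard
      have hji : j = i := by
        by_contra hne
        have hlt : i < j := lt_of_le_of_ne hij (Ne.symm hne)
        have : j ∈ Finset.univ.filter (fun k => i < k ∧ k ≤ j) :=
          Finset.mem_filter.mpr ⟨Finset.mem_univ _, hlt, le_refl j⟩
        have := Finset.card_pos.mpr ⟨j, this⟩
        omega
      rw [hbase j hji]
    | succ n ih =>
      intro j hij hcard
      by_cases hji : j = i
      · rw [hbase j hji]
      · have hij' : i < j := lt_of_le_of_ne hij (Ne.symm hji)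
        have hne0 : (Finset.univ.filter (fun k => i ≤ k ∧ k < j)).Nonempty :=
          ⟨i, Finset.mem_filter.mpr ⟨Finset.mem_univ _, le_refl i, hij'⟩⟩
        set j₀ := (Finset.univ.filter (fun k => i ≤ k ∧ k < j)).max' hne0 with hj₀def
        have hj₀mem := Finset.mem_filter.mp ((Finset.univ.filter (fun k => i ≤ k ∧ k < j)).max'_mem hne0)
        have hj₀max : ∀ k, i ≤ k → k < j → k ≤ j₀ := fun k h1 h2 =>
          Finset.le_max' _ k (Finset.mem_filter.mpr ⟨Finset.mem_univ _, h1, h2⟩)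
        have hij₀ : i ≤ j₀ := hj₀mem.2.1
        have hj₀j : j₀ < j := hj₀mem.2.2
        have hgt : ∀ k, j₀ < k ↔ j ≤ k := by
          intro k
          constructor
          · intro h
            by_contra hk
            push_neg at hk
            exact absurd (hj₀max k (le_of_lt (lt_of_le_of_lt hij₀ h)) hk) (not_le.mpr h)
          · intro h; exact lt_of_lt_of_le hj₀j h
        have hlej : ∀ k, k ≤ j₀ ↔ k < j := by
          intro k
          constructor
          · intro h; exact lt_of_le_of_lt h hj₀j
          · intro h
            rcases le_or_gt i k with h1 | h1
            · exact hj₀max k h1 h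
            · exact le_of_lt (lt_of_lt_of_le h1 hij₀)
        set X := B.filter (fun u => j < cls u) ∪ T.filter (fun u => i < cls u ∧ cls u < j)
          with hXdef
        have hXcls : ∀ u ∈ X, j < cls u ∨ (i < cls u ∧ cls u < j) := by
          intro u hu
          rcases Finset.mem_union.mp hu with h | h
          · exact Or.inl (Finset.mem_filter.mp h).2
          · exact Or.inr (Finset.mem_filter.mp h).2
        have hXsub : Subtransversal cls X := by
          intro a ha b hb hab
          rcases Finset.mem_union.mp (Finset.mem_coe.mp ha) with h1 | h1 <;>
            rcases Finset.mem_union.mp (Finset.mem_coe.mp hb) with h2 | h2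
          · exact hB.1 (Finset.mem_coe.mpr (Finset.mem_of_mem_filter a h1))
              (Finset.mem_coe.mpr (Finset.mem_of_mem_filter b h2)) hab
          · exact absurd ((Finset.mem_filter.mp h1).2.trans_eq hab)
              (not_lt.mpr (le_of_lt (Finset.mem_filter.mp h2).2.2))
          · exact absurd ((Finset.mem_filter.mp h2).2.trans_eq hab.symm)
              (not_lt.mpr (le_of_lt (Finset.mem_filter.mp h1).2.2))
          · exact hT.1 (Finset.mem_coe.mpr (Finset.mem_of_mem_filter a h1))
              (Finset.mem_coe.mpr (Finset.mem_of_mem_filter b h2)) hab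
        have hXfree : ∀ u ∈ X, cls u ≠ j := by
          intro u hu
          rcases hXcls u hu with h | h
          · exact ne_of_gt h
          · exact ne_of_lt h.2
        have hXfree_i : ∀ u ∈ X, cls u ≠ i := by
          intro u hu
          rcases hXcls u hu with h | h
          · exact ne_of_gt (lt_trans hij' h)
          · exact ne_of_gt h.1
        have hMj : mixedSet cls T B i j = insert (telt cls hT j) X := by
          ext u
          simp only [mixedSet, hXdef, Finset.mem_union, Finset.mem_filter, Finset.mem_insert]
          constructor
          · rintro (⟨h1, h2⟩ | ⟨h1, h2, h3⟩)
            · exact Or.inr (Or.inl ⟨h1, h2⟩)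
            · rcases lt_or_eq_of_le h3 with h4 | h4
              · exact Or.inr (Or.inr ⟨h1, h2, h4⟩)
              · left; rw [← telt_unique hT h1, h4]
          · rintro (rfl | ⟨h1, h2⟩ | ⟨h1, h2, h3⟩)
            · exact Or.inr ⟨telt_mem hT j, by rw [telt_cls hT j]; exact ⟨hij', le_refl j⟩⟩
            · exact Or.inl ⟨h1, h2⟩
            · exact Or.inr ⟨h1, h2, le_of_lt h3⟩
        have hMj₀ : mixedSet cls T B i j₀ = insert (telt cls hB j) X := by
          ext u
          simp only [mixedSet, hXdef, Finset.mem_union, Finset.mem_filter, Finset.mem_insert]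
          constructor
          · rintro (⟨h1, h2⟩ | ⟨h1, h2, h3⟩)
            · rcases lt_or_eq_of_le ((hgt (cls u)).mp h2) with h4 | h4
              · exact Or.inr (Or.inl ⟨h1, h4⟩)
              · left; rw [← telt_unique hB h1, ← h4]
            · exact Or.inr (Or.inr ⟨h1, h2, (hlej (cls u)).mp h3⟩)
          · rintro (rfl | ⟨h1, h2⟩ | ⟨h1, h2, h3⟩)
            · refine Or.inl ⟨telt_mem hB j, ?_⟩
              rw [telt_cls hB j]
              exact (hgt j).mpr (le_refl j)
            · exact Or.inl ⟨h1, (hgt (cls u)).mpr (le_of_lt h2)⟩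
            · exact Or.inr ⟨h1, h2, (hlej (cls u)).mpr h3⟩
        have hihcard : (Finset.univ.filter (fun k => i < k ∧ k ≤ j₀)).card ≤ n := by
          have hsubs : (Finset.univ.filter (fun k => i < k ∧ k ≤ j₀)) ⊆
              (Finset.univ.filter (fun k => i < k ∧ k ≤ j)).erase j := by
            intro k hk
            obtain ⟨_, hk1, hk2⟩ := Finset.mem_filter.mp hk
            refine Finset.mem_erase.mpr ⟨?_, Finset.mem_filter.mpr ⟨Finset.mem_univ _, hk1, le_of_lt (lt_of_le_of_lt hk2 hj₀j)⟩⟩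
            exact ne_of_lt (lt_of_le_of_lt hk2 hj₀j)
          have h1 := Finset.card_le_card hsubs
          have hjmem : j ∈ Finset.univ.filter (fun k => i < k ∧ k ≤ j) :=
            Finset.mem_filter.mpr ⟨Finset.mem_univ _, hij', le_refl j⟩
          have h2 := Finset.card_erase_of_mem hjmem
          have h3 : 0 < (Finset.univ.filter (fun k => i < k ∧ k ≤ j)).card :=
            Finset.card_pos.mpr ⟨j, hjmem⟩
          omega
        have hIH := ih j₀ hij₀ hihcard
        by_cases heq : telt cls hB j = telt cls hT j
        · rw [hMj, ← heq, ← hMj₀]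
          exact hIH
        · have hdep := (hcond j hij').resolve_left heq
          have hsubBj : above cls B j ⊆ X := Finset.subset_union_left
          have hclsTj : cls (telt cls hT j) = j := telt_cls hT j
          have hclsBj : cls (telt cls hB j) = j := telt_cls hB j
          have hsubinsT : Subtransversal cls (insert (telt cls hT j) X) :=
            subtr_insert hXsub (fun u hu => by rw [hclsTj]; exact hXfree u hu)
          have hsubinsB : Subtransversal cls (insert (telt cls hB j) X) :=
            subtr_insert hXsub (fun u hu => by rw [hclsBj]; exact hXfree u hu)
          have hclsTi : cls (telt cls hT i) = i := telt_cls hT i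
          have hfreeT : ∀ u ∈ insert (telt cls hT j) X, cls u ≠ cls (telt cls hT i) := by
            intro u hu
            rw [hclsTi]
            rcases Finset.mem_insert.mp hu with rfl | h
            · rw [hclsTj]; exact ne_of_gt hij'
            · exact hXfree_i u h
          have hfreeB : ∀ u ∈ insert (telt cls hB j) X, cls u ≠ cls (telt cls hT i) := by
            intro u hu
            rw [hclsTi]
            rcases Finset.mem_insert.mp hu with rfl | h
            · rw [hclsBj]; exact ne_of_gt hij'
            · exact hXfree_i u h
          have hsub1 : Subtransversal cls (insert (telt cls hT i) (insert (telt cls hT j) X)) :=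
            subtr_insert hsubinsT (fun u hu h => hfreeT u hu h)
          have hsub2 : Subtransversal cls (insert (telt cls hT i) (insert (telt cls hB j) X)) :=
            subtr_insert hsubinsB (fun u hu h => hfreeB u hu h)
          have hdtX : Dep cls r (telt cls hT j) X :=
            dep_mono hM hsubBj hsubinsT hdep
          have hswap := swap_dep hM hXsub (hclsTj.trans hclsBj.symm)
            (fun h => heq h.symm)
            (fun u hu => by rw [hclsTj]; exact hXfree u hu)
            (by rw [hclsTi, hclsTj]; exact ne_of_lt hij')
            hsub1 hsub2 hdtX
          rw [hMj, hMj₀] at *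
          exact hswap.trans hIH
  -- apply with the maximum class
  have huniv : (Finset.univ : Finset ι).Nonempty := ⟨i, Finset.mem_univ i⟩
  set jm := (Finset.univ : Finset ι).max' huniv with hjmdef
  have hjm : ∀ k : ι, k ≤ jm := fun k => Finset.le_max' _ k (Finset.mem_univ k)
  have hMtop : mixedSet cls T B i jm = above cls T i := by
    ext u
    simp only [mixedSet, Finset.mem_union, Finset.mem_filter, mem_above]
    constructor
    · rintro (⟨h1, h2⟩ | ⟨h1, h2, h3⟩)
      · exact absurd h2 (not_lt.mpr (hjm (cls u)))
      · exact ⟨h1, h2⟩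
    · rintro ⟨h1, h2⟩
      exact Or.inr ⟨h1, h2, hjm (cls u)⟩
  have := main (Fintype.card ι) jm (hjm i) (by
    calc (Finset.univ.filter (fun k => i < k ∧ k ≤ jm)).card
        ≤ (Finset.univ : Finset ι).card := Finset.card_filter_le _ _
      _ = Fintype.card ι := Finset.card_univ)
  rw [hMtop] at this
  exact this.symm

end Core

section Glue
variable [DecidableEq U] [Fintype U] [DecidableEq ι] [Fintype ι] [LinearOrder ι]
variable {cls : U → ι} {r : Finset U → ℕ}

lemma dep_Bnoti_of_circuit (hM : IsMultimatroid cls r) {B C : Finset U} {i : ι} {x : U}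
    (hB : Transversal cls B) (hC : Circuit cls r C) (hCsub : C ⊆ B ∪ skewClass cls i)
    (hxC : x ∈ C) (hxB : x ∉ B) :
    cls x = i ∧ Dep cls r x (B.filter (fun w => cls w ≠ i)) := by
  have hclsx : cls x = i := by
    rcases Finset.mem_union.mp (hCsub hxC) with h | h
    · exact absurd h hxB
    · exact mem_skewClass.mp h
  refine ⟨hclsx, ?_⟩
  have herase : C.erase x ⊆ B.filter (fun w => cls w ≠ i) := by
    intro a ha
    obtain ⟨hax, haC⟩ := Finset.mem_erase.mp ha
    have haB : a ∈ B ∧ cls a ≠ i := by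
      rcases Finset.mem_union.mp (hCsub haC) with h | h
      · constructor
        · exact h
        · intro hclsa
          exact hax (hC.1 (Finset.mem_coe.mpr haC) (Finset.mem_coe.mpr hxC)
            (hclsa.trans hclsx.symm))
      · exact absurd (hC.1 (Finset.mem_coe.mpr haC) (Finset.mem_coe.mpr hxC)
          ((mem_skewClass.mp h).trans hclsx.symm)) hax
    exact Finset.mem_filter.mpr haB
  refine dep_mono hM herase ?_ (circuit_dep_erase hM hC hxC)
  refine subtr_insert (subtr_mono hB.1 (Finset.filter_subset _ _)) ?_
  intro w hw
  rw [hclsx]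
  exact (Finset.mem_filter.mp hw).2

lemma active_of_dep (hM : IsMultimatroid cls r) {B : Finset U} {i : ι} {x : U}
    (hB : Transversal cls B) (hx : cls x = i) (hxB : x ∉ B)
    (hdep : Dep cls r x (above cls B i)) :
    Active cls r B i ∧ ∃ C, Circuit cls r C ∧ C ⊆ B ∪ skewClass cls i ∧ x ∈ C ∧ x ∉ B := by
  have hxab : x ∉ above cls B i := fun h => hxB (above_subset h)
  have hsub : Subtransversal cls (insert x (above cls B i)) := by
    refine subtr_insert (subtr_mono hB.1 above_subset) ?_
    intro w hw
    rw [hx]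
    exact ne_of_gt (mem_above.mp hw).2
  obtain ⟨C, hCcirc, hxC, hCsub⟩ := (dep_iff_circuit hM hsub hxab).mp hdep
  have hCsub' : C ⊆ B ∪ skewClass cls i := by
    intro a ha
    rcases Finset.mem_insert.mp (hCsub ha) with rfl | h
    · exact Finset.mem_union_right _ (mem_skewClass.mpr hx)
    · exact Finset.mem_union_left _ (above_subset h)
  refine ⟨⟨C, hCcirc, ?_, x, hxC, hx, ?_⟩, C, hCcirc, hCsub', hxC, hxB⟩
  · intro a ha
    obtain ⟨haC, hask⟩ := Finset.mem_sdiff.mp ha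
    rcases Finset.mem_insert.mp (hCsub haC) with rfl | h
    · exact absurd (mem_skewClass.mpr hx) hask
    · exact above_subset h
  · intro a ha
    rcases Finset.mem_insert.mp (hCsub ha) with rfl | h
    · exact le_of_eq hx.symm
    · exact le_of_lt (mem_above.mp h).2

lemma active_dep (hM : IsMultimatroid cls r) {B : Finset U} {i : ι}
    (hB : Transversal cls B) (hind : r B = B.card) (hact : Active cls r B i) :
    ∃ x, cls x = i ∧ x ∉ B ∧ Dep cls r x (above cls B i) := by
  obtain ⟨C, hCcirc, hCb, m, hm, hmcls, hmin⟩ := hact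
  have hCnotsub : ¬ C ⊆ B := by
    intro hsub
    have := indep_subset hM hB.1 hind hsub
    exact absurd this (ne_of_lt hCcirc.2.1)
  obtain ⟨x, hxC, hxB⟩ := Finset.not_subset.mp hCnotsub
  have hxsk : x ∈ skewClass cls i := by
    by_contra h
    exact hxB (hCb (Finset.mem_sdiff.mpr ⟨hxC, h⟩))
  have hclsx : cls x = i := mem_skewClass.mp hxsk
  refine ⟨x, hclsx, hxB, ?_⟩
  have herase : C.erase x ⊆ above cls B i := by
    intro a ha
    obtain ⟨hax, haC⟩ := Finset.mem_erase.mp ha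
    have hask : a ∉ skewClass cls i := by
      intro h
      exact hax (hCcirc.1 (Finset.mem_coe.mpr haC) (Finset.mem_coe.mpr hxC)
        ((mem_skewClass.mp h).trans hclsx.symm))
    have haB : a ∈ B := hCb (Finset.mem_sdiff.mpr ⟨haC, hask⟩)
    refine mem_above.mpr ⟨haB, ?_⟩
    rcases lt_or_eq_of_le (hmin a haC) with h | h
    · exact h
    · exact absurd (mem_skewClass.mpr h.symm) hask
  refine dep_mono hM herase ?_ (circuit_dep_erase hM hCcirc hxC)
  refine subtr_insert (subtr_mono hB.1 above_subset) ?_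
  intro w hw
  rw [hclsx]
  exact ne_of_gt (mem_above.mp hw).2

lemma underElt_eq (hM : IsMultimatroid cls r) {B : Finset U} {i : ι} {x : U}
    (hB : Transversal cls B) (hx : cls x = i) (hxB : x ∉ B)
    (hwit : ∃ C, Circuit cls r C ∧ C ⊆ B ∪ skewClass cls i ∧ x ∈ C ∧ x ∉ B) (d : U) :
    underElt cls r B i d = x := by
  have hex : ∃ y : U, ∃ C, Circuit cls r C ∧ C ⊆ B ∪ skewClass cls i ∧ y ∈ C ∧ y ∉ B :=
    ⟨x, hwit⟩
  rw [underElt, dif_pos hex]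
  obtain ⟨C₀, hC₀circ, hC₀sub, hyC₀, hyB⟩ := hex.choose_spec
  obtain ⟨hcls₀, hdep₀⟩ := dep_Bnoti_of_circuit hM hB hC₀circ hC₀sub hyC₀ hyB
  obtain ⟨C₁, hC₁circ, hC₁sub, hxC₁, _⟩ := hwit
  obtain ⟨_, hdep₁⟩ := dep_Bnoti_of_circuit hM hB hC₁circ hC₁sub hxC₁ hxB
  by_contra hne
  refine r2_unique hM (subtr_mono hB.1 (Finset.filter_subset _ _)) ?_
    (hcls₀.trans hx.symm) hne hdep₀ hdep₁
  intro w hw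
  rw [hcls₀]
  exact (Finset.mem_filter.mp hw).2

lemma mcs_iff (hM : IsMultimatroid cls r) {T : Finset U} (hT : Transversal cls T) (i : ι) :
    (∃ C, Circuit cls r C ∧ C ⊆ T ∧ ∃ m ∈ C, cls m = i ∧ ∀ x ∈ C, i ≤ cls x)
    ↔ Dep cls r (telt cls hT i) (above cls T i) := by
  constructor
  · rintro ⟨C, hCcirc, hCT, m, hmC, hmcls, hmin⟩
    have hmT : m = telt cls hT i := by
      rw [← telt_unique hT (hCT hmC), hmcls]
    have herase : C.erase m ⊆ above cls T i := by
      intro a ha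
      obtain ⟨ham, haC⟩ := Finset.mem_erase.mp ha
      refine mem_above.mpr ⟨hCT haC, ?_⟩
      rcases lt_or_eq_of_le (hmin a haC) with h | h
      · exact h
      · exact absurd (hCcirc.1 (Finset.mem_coe.mpr haC) (Finset.mem_coe.mpr hmC)
          (h.symm.trans hmcls.symm)) ham
    rw [← hmT]
    refine dep_mono hM herase ?_ (circuit_dep_erase hM hCcirc hmC)
    refine subtr_insert (subtr_mono hT.1 above_subset) ?_
    intro w hw
    rw [hmcls]
    exact ne_of_gt (mem_above.mp hw).2
  · intro hdep
    obtain ⟨J, hJsub, hJr, hJi⟩ := exists_rank_basis hM (subtr_mono hT.1 (above_subset (S := T) (i := i)))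
    have hteltn : telt cls hT i ∉ above cls T i := telt_notMem_above hT i
    have hteltnJ : telt cls hT i ∉ J := fun h => hteltn (hJsub h)
    have hsubins : Subtransversal cls (insert (telt cls hT i) (above cls T i)) := by
      refine subtr_insert (subtr_mono hT.1 above_subset) ?_
      intro w hw
      rw [telt_cls hT i]
      exact ne_of_gt (mem_above.mp hw).2
    have hdJ : Dep cls r (telt cls hT i) J := dep_restrict hM hJsub hJr hsubins hdep
    have hsubinsJ : Subtransversal cls (insert (telt cls hT i) J) :=
      subtr_mono hsubins (Finset.insert_subset_insert _ hJsub)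
    obtain ⟨C, hCcirc, hteltC, hCsub⟩ := (dep_iff_circuit hM hsubinsJ hteltnJ).mp hdJ
    refine ⟨C, hCcirc, ?_, telt cls hT i, hteltC, telt_cls hT i, ?_⟩
    · intro a ha
      rcases Finset.mem_insert.mp (hCsub ha) with rfl | h
      · exact telt_mem hT i
      · exact above_subset (hJsub h)
    · intro a ha
      rcases Finset.mem_insert.mp (hCsub ha) with rfl | h
      · exact le_of_eq (telt_cls hT i).symm
      · exact le_of_lt (mem_above.mp (hJsub h)).2

end Glue

section Main
variable [DecidableEq U] [Fintype U] [DecidableEq ι] [Fintype ι] [LinearOrder ι]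
variable {cls : U → ι} {r : Finset U → ℕ}

lemma pattern_rc (hM : IsMultimatroid cls r) {T B : Finset U}
    (hT : Transversal cls T) (hB : Transversal cls B)
    (hpat : ∀ i : ι,
      (Dep cls r (telt cls hT i) (above cls T i) → telt cls hB i ≠ telt cls hT i) ∧
      (¬ Dep cls r (telt cls hT i) (above cls T i) → telt cls hB i = telt cls hT i)) :
    ∀ i : ι, (telt cls hB i = telt cls hT i ∨ Dep cls r (telt cls hT i) (above cls B i)) ∧
      ¬ Dep cls r (telt cls hB i) (above cls B i) := by
  have step : ∀ i : ι,
      (∀ j, i < j → (telt cls hB j = telt cls hT j ∨ Dep cls r (telt cls hT j) (above cls B j)) ∧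
        ¬ Dep cls r (telt cls hB j) (above cls B j)) →
      (telt cls hB i = telt cls hT i ∨ Dep cls r (telt cls hT i) (above cls B i)) ∧
        ¬ Dep cls r (telt cls hB i) (above cls B i) := by
    intro i IH1
    have hcore := core hM hT hB i (fun j hj => (IH1 j hj).1)
    by_cases hmcs : Dep cls r (telt cls hT i) (above cls T i)
    · have hne := (hpat i).1 hmcs
      have hdB := hcore.mpr hmcs
      refine ⟨Or.inr hdB, ?_⟩
      intro hd
      refine r2_unique hM (subtr_mono hB.1 above_subset) ?_
        ((telt_cls hB i).trans (telt_cls hT i).symm) hne hd hdB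
      intro w hw
      rw [telt_cls hB i]
      exact ne_of_gt (mem_above.mp hw).2
    · have heqi := (hpat i).2 hmcs
      refine ⟨Or.inl heqi, ?_⟩
      rw [heqi]
      exact fun hd => hmcs (hcore.mp hd)
  have key : ∀ n : ℕ, ∀ i : ι, (Finset.univ.filter (fun j => i < j)).card ≤ n →
      (telt cls hB i = telt cls hT i ∨ Dep cls r (telt cls hT i) (above cls B i)) ∧
        ¬ Dep cls r (telt cls hB i) (above cls B i) := by
    intro n
    induction n with
    | zero =>
      intro i hcard
      refine step i (fun j hj => ?_)
      exfalso
      have : j ∈ Finset.univ.filter (fun k => i < k) :=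
        Finset.mem_filter.mpr ⟨Finset.mem_univ _, hj⟩
      have := Finset.card_pos.mpr ⟨j, this⟩
      omega
    | succ n ih =>
      intro i hcard
      refine step i (fun j hj => ih j ?_)
      have hsubs : (Finset.univ.filter (fun k => j < k)) ⊆
          (Finset.univ.filter (fun k => i < k)).erase j := by
        intro k hk
        have hjk := (Finset.mem_filter.mp hk).2
        exact Finset.mem_erase.mpr ⟨ne_of_gt hjk,
          Finset.mem_filter.mpr ⟨Finset.mem_univ _, lt_trans hj hjk⟩⟩
      have h1 := Finset.card_le_card hsubs
      have hjm : j ∈ Finset.univ.filter (fun k => i < k) :=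
        Finset.mem_filter.mpr ⟨Finset.mem_univ _, hj⟩
      have h2 := Finset.card_erase_of_mem hjm
      have h3 := Finset.card_pos.mpr ⟨j, hjm⟩
      omega
  intro i
  exact key (Fintype.card ι) i (by
    calc (Finset.univ.filter (fun j => i < j)).card ≤ (Finset.univ : Finset ι).card :=
          Finset.card_filter_le _ _
      _ = Fintype.card ι := Finset.card_univ)

lemma lean_to_rc (hM : IsMultimatroid cls r) {T B : Finset U}
    (hT : Transversal cls T) (hB : Transversal cls B) (hind : r B = B.card)
    (hC2 : T ⊆ B ∪ (B.filter (fun u => Active cls r B (cls u))).image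
        (fun u => underElt cls r B (cls u) u)) (i : ι) :
    telt cls hB i = telt cls hT i ∨ Dep cls r (telt cls hT i) (above cls B i) := by
  by_cases huB : telt cls hT i ∈ B
  · left
    have := telt_unique hB huB
    rwa [telt_cls hT i] at this
  · right
    have humem := hC2 (telt_mem hT i)
    rcases Finset.mem_union.mp humem with h | h
    · exact absurd h huB
    obtain ⟨v, hv, heq⟩ := Finset.mem_image.mp h
    have hact : Active cls r B (cls v) := (Finset.mem_filter.mp hv).2
    obtain ⟨x', hx'cls, hx'B, hx'dep⟩ := active_dep hM hB hind hact
    obtain ⟨_, hwit⟩ := active_of_dep hM hB hx'cls hx'B hx'dep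
    have hue : underElt cls r B (cls v) v = x' := underElt_eq hM hB hx'cls hx'B hwit v
    rw [hue] at heq
    have hvi : cls v = i := hx'cls.symm.trans ((congrArg cls heq).trans (telt_cls hT i))
    rw [heq, hvi] at hx'dep
    exact hx'dep

noncomputable def mcsSet (cls : U → ι) (r : Finset U → ℕ) (T : Finset U) : Finset ι :=
  Finset.univ.filter (fun i : ι => ∃ C, Circuit cls r C ∧ C ⊆ T ∧
    ∃ m ∈ C, cls m = i ∧ ∀ x ∈ C, i ≤ cls x)

noncomputable def allowedSet (cls : U → ι) (r : Finset U → ℕ) {T : Finset U}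
    (hT : Transversal cls T) (i : ι) : Finset U :=
  if i ∈ mcsSet cls r T then (skewClass cls i).erase (telt cls hT i) else {telt cls hT i}

lemma mem_mcsSet_iff (hM : IsMultimatroid cls r) {T : Finset U} (hT : Transversal cls T)
    (i : ι) : i ∈ mcsSet cls r T ↔ Dep cls r (telt cls hT i) (above cls T i) := by
  rw [mcsSet, Finset.mem_filter]
  simp only [Finset.mem_univ, true_and]
  exact mcs_iff hM hT i

lemma main_iff (hM : IsMultimatroid cls r) (hnd : Nondegenerate cls) {T : Finset U}
    (hT : Transversal cls T) (B : Finset U) :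
    (MMBasis cls r B ∧
      B \ B.filter (fun u => Active cls r B (cls u)) ⊆ T ∧
      T ⊆ B ∪ (B.filter (fun u => Active cls r B (cls u))).image
          (fun u => underElt cls r B (cls u) u)) ↔
    (Transversal cls B ∧ ∀ u ∈ B, u ∈ allowedSet cls r hT (cls u)) := by
  constructor
  · rintro ⟨hBas, hC1, hC2⟩
    obtain ⟨hB, hind⟩ := (mmbasis_iff hM hnd).mp hBas
    refine ⟨hB, ?_⟩
    have hrc := lean_to_rc hM hT hB hind hC2
    intro u huB
    set i := cls u with hidef
    have hu : telt cls hB i = u := telt_unique hB huB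
    have hcore := core hM hT hB i (fun j _ => hrc j)
    have hstep := indep_stepwise hM hB hind i
    by_cases hmem : i ∈ mcsSet cls r T
    · rw [allowedSet, if_pos hmem]
      have hdT := (mem_mcsSet_iff hM hT i).mp hmem
      have hdB := hcore.mpr hdT
      refine Finset.mem_erase.mpr ⟨?_, mem_skewClass.mpr hidef.symm⟩
      intro heq
      exact hstep (by rw [hu, heq]; exact hdB)
    · rw [allowedSet, if_neg hmem]
      have hne : ¬ Dep cls r (telt cls hT i) (above cls B i) :=
        fun h => hmem ((mem_mcsSet_iff hM hT i).mpr (hcore.mp h))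
      have heqi := (hrc i).resolve_right hne
      refine Finset.mem_singleton.mpr ?_
      rw [← hu, heqi]
  · rintro ⟨hB, hpatmem⟩
    have hpat : ∀ i : ι,
        (Dep cls r (telt cls hT i) (above cls T i) → telt cls hB i ≠ telt cls hT i) ∧
        (¬ Dep cls r (telt cls hT i) (above cls T i) → telt cls hB i = telt cls hT i) := by
      intro i
      have hmem := hpatmem (telt cls hB i) (telt_mem hB i)
      rw [telt_cls hB i] at hmem
      constructor
      · intro hdT heq
        rw [allowedSet, if_pos ((mem_mcsSet_iff hM hT i).mpr hdT)] at hmem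
        exact (Finset.mem_erase.mp hmem).1 heq
      · intro hdT
        rw [allowedSet, if_neg (fun h => hdT ((mem_mcsSet_iff hM hT i).mp h))] at hmem
        exact Finset.mem_singleton.mp hmem
    have hprc := pattern_rc hM hT hB hpat
    have hind : r B = B.card := stepwise_indep hM hB (fun i => (hprc i).2)
    have hBas : MMBasis cls r B := (mmbasis_iff hM hnd).mpr ⟨hB, hind⟩
    refine ⟨hBas, ?_, ?_⟩
    · intro u hu
      obtain ⟨huB, hunact⟩ := Finset.mem_sdiff.mp hu
      set i := cls u with hidef
      have hu' : telt cls hB i = u := telt_unique hB huB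
      rcases (hprc i).1 with heq | hdep
      · have hut : u = telt cls hT i := hu'.symm.trans heq
        rw [hut]
        exact telt_mem hT i
      · exfalso
        apply hunact
        refine Finset.mem_filter.mpr ⟨huB, ?_⟩
        have hTne : telt cls hT i ∉ B := by
          intro h
          have h2 := telt_unique hB h
          rw [telt_cls hT i] at h2
          rw [← h2] at hdep
          exact (hprc i).2 hdep
        have hao := active_of_dep hM hB (telt_cls hT i) hTne hdep
        rw [← hidef]
        exact hao.1
    · intro u huT
      set i := cls u with hidef
      have hu' : telt cls hT i = u := telt_unique hT huT
      by_cases huB : u ∈ B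
      · exact Finset.mem_union_left _ huB
      · have hne : telt cls hB i ≠ telt cls hT i := by
          intro h
          apply huB
          rw [← hu', ← h]
          exact telt_mem hB i
        have hdep : Dep cls r (telt cls hT i) (above cls B i) := (hprc i).1.resolve_left hne
        rw [hu'] at hdep
        obtain ⟨hActive, hwit⟩ := active_of_dep hM hB hidef.symm huB hdep
        refine Finset.mem_union_right _ ?_
        refine Finset.mem_image.mpr ⟨telt cls hB i, ?_, ?_⟩
        · refine Finset.mem_filter.mpr ⟨telt_mem hB i, ?_⟩
          rw [telt_cls hB i]
          exact hActive
        · rw [telt_cls hB i]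
          exact underElt_eq hM hB hidef.symm huB hwit _

end Main

section Count
variable [DecidableEq U] [Fintype U] [DecidableEq ι] [Fintype ι]
variable {cls : U → ι} {r : Finset U → ℕ}

lemma count_transversals (A : ι → Finset U) (hA : ∀ i, ∀ u ∈ A i, cls u = i) :
    (Finset.univ.filter (fun B : Finset U => Transversal cls B ∧ ∀ u ∈ B, u ∈ A (cls u))).card
      = ∏ i : ι, (A i).card := by
  classical
  rw [← Finset.card_pi]
  have huniq : ∀ B : Finset U, Transversal cls B → ∀ i, ∃! u, u ∈ B ∧ cls u = i := by
    intro B hB i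
    obtain ⟨x, hx, hcls⟩ := hB.2 i
    refine ⟨x, ⟨hx, hcls⟩, ?_⟩
    rintro y ⟨hy, hycls⟩
    exact hB.1 (Finset.mem_coe.mpr hy) (Finset.mem_coe.mpr hx) (hycls.trans hcls.symm)
  refine Finset.card_bij'
    (i := fun B hB => fun i (_ : i ∈ Finset.univ) =>
      B.choose (fun u => cls u = i)
        (huniq B (Finset.mem_filter.mp hB).2.1 i))
    (j := fun f _ => Finset.univ.image (fun i : ι => f i (Finset.mem_univ i)))
    ?_ ?_ ?_ ?_
  · -- maps into pi
    intro B hB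
    rw [Finset.mem_pi]
    intro i _
    have hBt := (Finset.mem_filter.mp hB).2
    have hmem := Finset.choose_mem (fun u => cls u = i) B (huniq B hBt.1 i)
    have hcls := Finset.choose_property (fun u => cls u = i) B (huniq B hBt.1 i)
    have := hBt.2 _ hmem
    rwa [hcls] at this
  · -- maps into filter set
    intro f hf
    rw [Finset.mem_pi] at hf
    have hcls : ∀ i : ι, cls (f i (Finset.mem_univ i)) = i := fun i =>
      hA i _ (hf i (Finset.mem_univ i))
    refine Finset.mem_filter.mpr ⟨Finset.mem_univ _, ⟨⟨?_, ?_⟩, ?_⟩⟩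
    · intro a ha b hb hab
      obtain ⟨i, _, rfl⟩ := Finset.mem_image.mp (Finset.mem_coe.mp ha)
      obtain ⟨i', _, rfl⟩ := Finset.mem_image.mp (Finset.mem_coe.mp hb)
      have : i = i' := by rw [← hcls i, ← hcls i', hab]
      subst this
      rfl
    · intro i
      exact ⟨f i (Finset.mem_univ i), Finset.mem_image.mpr ⟨i, Finset.mem_univ i, rfl⟩, hcls i⟩
    · intro u hu
      obtain ⟨i, _, rfl⟩ := Finset.mem_image.mp hu
      rw [hcls i]
      exact hf i (Finset.mem_univ i)
  · -- left inverse
    intro B hB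
    have hBt := (Finset.mem_filter.mp hB).2
    ext u
    simp only [Finset.mem_image, Finset.mem_univ, true_and]
    constructor
    · rintro ⟨i, rfl⟩
      exact Finset.choose_mem _ _ _
    · intro hu
      refine ⟨cls u, ?_⟩
      have := (huniq B hBt.1 (cls u)).unique
        ⟨Finset.choose_mem (fun v => cls v = cls u) B (huniq B hBt.1 (cls u)),
          Finset.choose_property (fun v => cls v = cls u) B (huniq B hBt.1 (cls u))⟩
        ⟨hu, rfl⟩
      exact this
  · -- right inverse
    intro f hf
    rw [Finset.mem_pi] at hf
    funext i hi
    have hcls : ∀ i : ι, cls (f i (Finset.mem_univ i)) = i := fun i =>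
      hA i _ (hf i (Finset.mem_univ i))
    set Bf := Finset.univ.image (fun i : ι => f i (Finset.mem_univ i)) with hBfdef
    have hBft : Transversal cls Bf := by
      constructor
      · intro a ha b hb hab
        obtain ⟨i', _, rfl⟩ := Finset.mem_image.mp (Finset.mem_coe.mp ha)
        obtain ⟨i'', _, rfl⟩ := Finset.mem_image.mp (Finset.mem_coe.mp hb)
        have : i' = i'' := by rw [← hcls i', ← hcls i'', hab]
        subst this
        rfl
      · intro i'
        exact ⟨f i' (Finset.mem_univ i'), Finset.mem_image.mpr ⟨i', Finset.mem_univ i', rfl⟩,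
          hcls i'⟩
    have h1 := (huniq Bf hBft i).unique
      ⟨Finset.choose_mem (fun v => cls v = i) Bf (huniq Bf hBft i),
        Finset.choose_property (fun v => cls v = i) Bf (huniq Bf hBft i)⟩
      ⟨Finset.mem_image.mpr ⟨i, Finset.mem_univ i, rfl⟩, hcls i⟩
    exact h1

end Count

/-- each transversal `T` lies in exactly `∏_{ω ∈ mcs(T,≺)} (|ω|−1)`
of the sets `H_Z(B) = {T : B − B_int ⊆ T ⊆ B ∪ B_ext}` over bases `B`. Here
`B_int` is the set of elements of `B` in active skew classes and `B_ext` the set of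
corresponding elements `B̲_ω`, and `mcs(T,≺)` is the set of skew classes containing
the `≺`-least element of some circuit contained in `T`. -/

theorem stmt_15 [DecidableEq U] [Fintype U] [DecidableEq ι] [Fintype ι] [LinearOrder ι]
    (cls : U → ι) (r : Finset U → ℕ) (hM : IsMultimatroid cls r)
    (hnd : Nondegenerate cls) (T : Finset U) (hT : Transversal cls T) :
    (Finset.univ.filter (fun B : Finset U => MMBasis cls r B ∧
        B \ B.filter (fun u => Active cls r B (cls u)) ⊆ T ∧
        T ⊆ B ∪ (B.filter (fun u => Active cls r B (cls u))).image
              (fun u => underElt cls r B (cls u) u))).card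
      = ∏ i ∈ Finset.univ.filter (fun i : ι => ∃ C, Circuit cls r C ∧ C ⊆ T ∧
            ∃ m ∈ C, cls m = i ∧ ∀ x ∈ C, i ≤ cls x),
          ((skewClass cls i).card - 1) := by
    classical
  have hallow : ∀ i : ι, ∀ u ∈ allowedSet cls r hT i, cls u = i := by
    intro i u hu
    rw [allowedSet] at hu
    split_ifs at hu with h
    · exact mem_skewClass.mp (Finset.mem_erase.mp hu).2
    · rw [Finset.mem_singleton.mp hu]
      exact telt_cls hT i
  have hfilter : Finset.univ.filter (fun B : Finset U => MMBasis cls r B ∧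
        B \ B.filter (fun u => Active cls r B (cls u)) ⊆ T ∧
        T ⊆ B ∪ (B.filter (fun u => Active cls r B (cls u))).image
              (fun u => underElt cls r B (cls u) u))
      = Finset.univ.filter (fun B : Finset U => Transversal cls B ∧
          ∀ u ∈ B, u ∈ allowedSet cls r hT (cls u)) := by
    apply Finset.filter_congr
    intro B _
    exact main_iff hM hnd hT B
  rw [hfilter, count_transversals (cls := cls) (allowedSet cls r hT) hallow]
  have hcard : ∀ i : ι, (allowedSet cls r hT i).card =
      if i ∈ mcsSet cls r T then (skewClass cls i).card - 1 else 1 := by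
    intro i
    rw [allowedSet]
    split_ifs with h
    · exact Finset.card_erase_of_mem (mem_skewClass.mpr (telt_cls hT i))
    · simp
  have hmcs : Finset.univ.filter (fun i : ι => ∃ C, Circuit cls r C ∧ C ⊆ T ∧
      ∃ m ∈ C, cls m = i ∧ ∀ x ∈ C, i ≤ cls x) = mcsSet cls r T := rfl
  rw [hmcs]
  calc ∏ i : ι, (allowedSet cls r hT i).card
      = ∏ i : ι, (if i ∈ mcsSet cls r T then (skewClass cls i).card - 1 else 1) :=
        Finset.prod_congr rfl (fun i _ => hcard i)
    _ = ∏ i ∈ Finset.univ ∩ mcsSet cls r T, ((skewClass cls i).card - 1) :=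
        Finset.prod_ite_mem _ _ _
    _ = ∏ i ∈ mcsSet cls r T, ((skewClass cls i).card - 1) := by rw [Finset.univ_inter]
end

section
/- Let Z be a multimatroid with total order ≺ on its skew classes, T a transversal, and ω, ω' skew classes. If C₁ and C₂ are circuits of Z with min(Cᵢ) ∈ ω and Cᵢ − ω ⊆ T for i = 1, 2, then min(C₁) = min(C₂). -/
/-!
Write `A = (C₁ - m₁) ∪ (C₂ - m₂)`; it lies in `T` and misses the class `ω` of `m₁` and `m₂`,
so `A`, `A + m₁` and `A + m₂` are subtransversals. Each `Cⱼ - mⱼ` spans `mⱼ`, hence by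
submodularity `r (A + mⱼ) = r A` for both `j`. If `m₁ ≠ m₂`, axiom (R2) asks for
`2 r A + 1 ≤ r (A + m₁) + r (A + m₂) = 2 r A`, which is absurd.
-/

open Finset

variable {U ι : Type}

section Multimatroid

variable {cls : U → ι} {r : Finset U → ℕ}

theorem Subtransversal.mono {S S' : Finset U} (h : Subtransversal cls S') (hS : S ⊆ S') :
    Subtransversal cls S :=
  Set.InjOn.mono (by exact_mod_cast hS) h

variable [DecidableEq U]

theorem Subtransversal.insert {S : Finset U} {x : U} (h : Subtransversal cls S)
    (hx : ∀ u ∈ S, cls u ≠ cls x) : Subtransversal cls (insert x S) := by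
  by_cases hxS : x ∈ S
  · exact absurd rfl (hx x hxS)
  · unfold Subtransversal
    rw [coe_insert, Set.injOn_insert (by exact_mod_cast hxS)]
    exact ⟨h, fun ⟨u, hu, hux⟩ => hx u hu hux⟩

theorem Circuit.cls_ne_of_mem_erase {C : Finset U} {m x : U} (hC : Circuit cls r C)
    (hm : m ∈ C) (hx : x ∈ C.erase m) : cls x ≠ cls m := fun hxm =>
  (ne_of_mem_erase hx) (hC.1 (mem_of_mem_erase hx) hm hxm)

theorem IsMultimatroid.rank_erase_of_circuit (hM : IsMultimatroid cls r) {C : Finset U}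
    {m : U} (hC : Circuit cls r C) (hm : m ∈ C) : r (C.erase m) = r C := by
  have hindep : (C.erase m).card ≤ r (C.erase m) := not_lt.1 (hC.2.2 _ (erase_ssubset hm))
  have hcard : (C.erase m).card + 1 = C.card := card_erase_add_one hm
  have hmono : r (C.erase m) ≤ r C := hM.mono _ _ hC.1 (erase_subset m C)
  have hdep := hC.2.1
  omega

theorem IsMultimatroid.rank_insert_le_of_circuit (hM : IsMultimatroid cls r)
    {A C : Finset U} {m : U} (hC : Circuit cls r C) (hm : m ∈ C) (hCA : C.erase m ⊆ A)
    (hA : Subtransversal cls (insert m A)) : r (insert m A) ≤ r A := by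
  have hunion : A ∪ C = insert m A := by
    rw [← insert_erase hm, union_insert, union_eq_left.2 hCA]
  have hinter : C.erase m ⊆ A ∩ C := subset_inter hCA (erase_subset m C)
  have hsubmod := hM.submod A C (hunion ▸ hA)
  have hmono : r (C.erase m) ≤ r (A ∩ C) :=
    hM.mono _ _ (hA.mono (hunion ▸ inter_subset_union)) hinter
  rw [hunion, ← hM.rank_erase_of_circuit hC hm] at hsubmod
  omega

/-- The union of two circuits cannot contain exactly one skew pair. -/
theorem IsMultimatroid.eq_of_circuits (hM : IsMultimatroid cls r) {A C₁ C₂ : Finset U}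
    {m₁ m₂ : U} (h₁ : Circuit cls r C₁) (h₂ : Circuit cls r C₂) (hm₁ : m₁ ∈ C₁) (hm₂ : m₂ ∈ C₂)
    (hcls : cls m₁ = cls m₂) (hA : Subtransversal cls A) (hAm : ∀ u ∈ A, cls u ≠ cls m₁)
    (hCA₁ : C₁.erase m₁ ⊆ A) (hCA₂ : C₂.erase m₂ ⊆ A) : m₁ = m₂ := by
  by_contra hne
  have hr₁ := hM.rank_insert_le_of_circuit h₁ hm₁ hCA₁ (hA.insert hAm)
  have hr₂ := hM.rank_insert_le_of_circuit h₂ hm₂ hCA₂ (hA.insert (hcls ▸ hAm))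
  have hR2 := hM.axiomR2 A m₁ m₂ hA hcls hne hAm
  omega

end Multimatroid

theorem stmt_16_general [DecidableEq U] [Fintype U] [DecidableEq ι]
    (cls : U → ι) (r : Finset U → ℕ) (hM : IsMultimatroid cls r)
    (T : Finset U) (hT : Transversal cls T) (i : ι)
    (C₁ C₂ : Finset U) (h1 : Circuit cls r C₁) (h2 : Circuit cls r C₂)
    (m₁ : U) (hm₁ : m₁ ∈ C₁) (hm₁i : cls m₁ = i)
    (hsub₁ : C₁ \ skewClass cls i ⊆ T)
    (m₂ : U) (hm₂ : m₂ ∈ C₂) (hm₂i : cls m₂ = i)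
    (hsub₂ : C₂ \ skewClass cls i ⊆ T) :
    m₁ = m₂ := by
  subst hm₁i
  set A := C₁.erase m₁ ∪ C₂.erase m₂
  have hAm : ∀ u ∈ A, cls u ≠ cls m₁ := by
    intro u hu
    rcases mem_union.1 hu with hu | hu
    · exact h1.cls_ne_of_mem_erase hm₁ hu
    · exact hm₂i ▸ h2.cls_ne_of_mem_erase hm₂ hu
  have hAT : A ⊆ T := fun u hu => by
    have hu' : u ∉ skewClass cls (cls m₁) := by simpa [skewClass] using hAm u hu
    rcases mem_union.1 hu with hu | hu
    · exact hsub₁ (mem_sdiff.2 ⟨mem_of_mem_erase hu, hu'⟩)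
    · exact hsub₂ (mem_sdiff.2 ⟨mem_of_mem_erase hu, hu'⟩)
  exact hM.eq_of_circuits h1 h2 hm₁ hm₂ hm₂i.symm (hT.1.mono hAT) hAm
    subset_union_left subset_union_right

/-- if `C₁`, `C₂` are circuits whose least elements `m₁`, `m₂` lie in
the skew class `i` and `Cⱼ − ω_i ⊆ T` for a transversal `T`, then `m₁ = m₂`. -/
theorem stmt_16 [DecidableEq U] [Fintype U] [DecidableEq ι] [Fintype ι] [LinearOrder ι]
    (cls : U → ι) (r : Finset U → ℕ) (hM : IsMultimatroid cls r)
    (T : Finset U) (hT : Transversal cls T) (i : ι)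
    (C₁ C₂ : Finset U) (h1 : Circuit cls r C₁) (h2 : Circuit cls r C₂)
    (m₁ : U) (hm₁ : m₁ ∈ C₁) (hm₁i : cls m₁ = i) (hmin₁ : ∀ x ∈ C₁, i ≤ cls x)
    (hsub₁ : C₁ \ skewClass cls i ⊆ T)
    (m₂ : U) (hm₂ : m₂ ∈ C₂) (hm₂i : cls m₂ = i) (hmin₂ : ∀ x ∈ C₂, i ≤ cls x)
    (hsub₂ : C₂ \ skewClass cls i ⊆ T) :
    m₁ = m₂ :=
  stmt_16_general cls r hM T hT i C₁ C₂ h1 h2 m₁ hm₁ hm₁i hsub₁ m₂ hm₂ hm₂i hsub₂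
end
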